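/- Let (g,≺) be a gflow for a labelled open graph (G,I,O,λ) and suppose v,w ∈ V∖O satisfy v ≺ w. Define g'(v) := g(v) Δ g(w) and g'(u) := g(u) for all other u. Then (g',≺) is a gflow for (G,I,O,λ). -/

import Mathlib

/-! Only the correcting set of `v` changes. As `≺` is a strict order and `v ≺ w`, the vertex `v`
lies neither in `g w` nor in `Odd (g w)`; by linearity of `Odd`, membership of `v` in the new set
and in its odd neighbourhood is as before, so the plane condition at `v` survives. Every other
vertex contributed by `g w` or `Odd (g w)` is `w` or a successor of `w`, hence a successor
of `v`. -/

open Set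

/-- The three measurement planes. -/
inductive MPlane | XY | XZ | YZ
deriving DecidableEq

/-- The odd neighbourhood of a set `K`: vertices with an odd number of neighbours in `K`. -/
def oddNbhd {V : Type*} (G : SimpleGraph V) (K : Set V) : Set V :=
  {u | Odd (K ∩ G.neighborSet u).ncard}

/-- `(g, prec)` is a gflow for the labelled open graph `(G, I, O, lam)`. -/
structure GFlow {V : Type*} (G : SimpleGraph V) (I O : Set V) (lam : V → MPlane)
    (g : V → Set V) (prec : V → V → Prop) : Prop where
  irrefl : ∀ v, ¬ prec v v
  trans : ∀ u v w, prec u v → prec v w → prec u w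
  noInput : ∀ v, v ∉ O → g v ∩ I = ∅
  g1 : ∀ v, v ∉ O → ∀ w ∈ g v, w ≠ v → prec v w
  g2 : ∀ v, v ∉ O → ∀ w ∈ oddNbhd G (g v), w ≠ v → prec v w
  gXY : ∀ v, v ∉ O → lam v = MPlane.XY → v ∉ g v ∧ v ∈ oddNbhd G (g v)
  gXZ : ∀ v, v ∉ O → lam v = MPlane.XZ → v ∈ g v ∧ v ∈ oddNbhd G (g v)
  gYZ : ∀ v, v ∉ O → lam v = MPlane.YZ → v ∈ g v ∧ v ∉ oddNbhd G (g v)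

open scoped symmDiff

namespace Set

variable {α : Type*} {s t : Set α}

theorem ncard_symmDiff_add_two_mul_ncard_inter (hs : s.Finite) (ht : t.Finite) :
    (s ∆ t).ncard + 2 * (s ∩ t).ncard = s.ncard + t.ncard := by
  have hsub : s ∩ t ⊆ s ∪ t := inter_subset_left.trans subset_union_left
  rw [symmDiff_eq_sup_sdiff_inf, two_mul, ← add_assoc]
  change ((s ∪ t) \ (s ∩ t)).ncard + _ + _ = _
  rw [ncard_sdiff_add_ncard_of_subset hsub (hs.union ht), ncard_union_add_ncard_inter s t hs ht]

theorem odd_ncard_symmDiff_iff (hs : s.Finite) (ht : t.Finite) :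
    Odd (s ∆ t).ncard ↔ ¬(Odd s.ncard ↔ Odd t.ncard) := by
  have h := ncard_symmDiff_add_two_mul_ncard_inter hs ht
  simp only [Nat.odd_iff]
  omega

end Set

theorem oddNbhd_symmDiff {V : Type*} (G : SimpleGraph V) [G.LocallyFinite] (K L : Set V) :
    oddNbhd G (K ∆ L) = oddNbhd G K ∆ oddNbhd G L := by
  ext u
  have hfin (M : Set V) : (M ∩ G.neighborSet u).Finite :=
    (G.neighborSet u).toFinite.inter_of_right M
  simp only [oddNbhd, Set.mem_ofPred_eq, Set.inter_symmDiff_distrib_right, Set.mem_symmDiff,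
    Set.odd_ncard_symmDiff_iff (hfin K) (hfin L)]
  tauto

/-- The conditions a gflow imposes on the correcting set `K = g v` of a single vertex `v`. -/
structure IsCorrectingSet {V : Type*} (G : SimpleGraph V) (I : Set V) (lam : V → MPlane)
    (prec : V → V → Prop) (v : V) (K : Set V) : Prop where
  inter_input : K ∩ I = ∅
  g1 : ∀ w ∈ K, w ≠ v → prec v w
  g2 : ∀ w ∈ oddNbhd G K, w ≠ v → prec v w
  gXY : lam v = MPlane.XY → v ∉ K ∧ v ∈ oddNbhd G K
  gXZ : lam v = MPlane.XZ → v ∈ K ∧ v ∈ oddNbhd G K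
  gYZ : lam v = MPlane.YZ → v ∈ K ∧ v ∉ oddNbhd G K

namespace IsCorrectingSet

variable {V : Type*} {G : SimpleGraph V} {I : Set V} {lam : V → MPlane} {prec : V → V → Prop}
  {v w : V} {K L : Set V}

theorem notMem_of_prec (hL : IsCorrectingSet G I lam prec w L) (hirrefl : ∀ u, ¬ prec u u)
    (htrans : ∀ a b c, prec a b → prec b c → prec a c) (hvw : prec v w) : v ∉ L := fun hv =>
  hirrefl v (htrans v w v hvw (hL.g1 v hv fun h => hirrefl v (h ▸ hvw)))

theorem notMem_oddNbhd_of_prec (hL : IsCorrectingSet G I lam prec w L)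
    (hirrefl : ∀ u, ¬ prec u u)
    (htrans : ∀ a b c, prec a b → prec b c → prec a c) (hvw : prec v w) : v ∉ oddNbhd G L :=
  fun hv => hirrefl v (htrans v w v hvw (hL.g2 v hv fun h => hirrefl v (h ▸ hvw)))

theorem symmDiff [G.LocallyFinite] (hK : IsCorrectingSet G I lam prec v K)
    (hL : IsCorrectingSet G I lam prec w L) (hirrefl : ∀ u, ¬ prec u u)
    (htrans : ∀ a b c, prec a b → prec b c → prec a c) (hvw : prec v w) :
    IsCorrectingSet G I lam prec v (K ∆ L) := by
  have succ_of_succ_w (u : V) (hu : u ≠ w → prec w u) : prec v u := by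
    by_cases huw : u = w
    · exact huw ▸ hvw
    · exact htrans v w u hvw (hu huw)
  have hv : v ∈ K ∆ L ↔ v ∈ K := by
    simp [Set.mem_symmDiff, hL.notMem_of_prec hirrefl htrans hvw]
  have hv_odd : v ∈ oddNbhd G (K ∆ L) ↔ v ∈ oddNbhd G K := by
    simp [oddNbhd_symmDiff, Set.mem_symmDiff, hL.notMem_oddNbhd_of_prec hirrefl htrans hvw]
  refine ⟨?_, ?_, ?_, ?_, ?_, ?_⟩
  · rw [Set.inter_symmDiff_distrib_right, hK.inter_input, hL.inter_input, symmDiff_self,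
      Set.bot_eq_empty]
  · rintro u (⟨hu, -⟩ | ⟨hu, -⟩) huv
    · exact hK.g1 u hu huv
    · exact succ_of_succ_w u (hL.g1 u hu)
  · rw [oddNbhd_symmDiff]
    rintro u (⟨hu, -⟩ | ⟨hu, -⟩) huv
    · exact hK.g2 u hu huv
    · exact succ_of_succ_w u (hL.g2 u hu)
  · rw [hv, hv_odd]; exact hK.gXY
  · rw [hv, hv_odd]; exact hK.gXZ
  · rw [hv, hv_odd]; exact hK.gYZ

end IsCorrectingSet

namespace GFlow

variable {V : Type*} {G : SimpleGraph V} {I O : Set V} {lam : V → MPlane} {g : V → Set V}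
  {prec : V → V → Prop}

theorem isCorrectingSet (h : GFlow G I O lam g prec) {v : V} (hv : v ∉ O) :
    IsCorrectingSet G I lam prec v (g v) :=
  ⟨h.noInput v hv, h.g1 v hv, h.g2 v hv, h.gXY v hv, h.gXZ v hv, h.gYZ v hv⟩

theorem of_isCorrectingSet (hirrefl : ∀ u, ¬ prec u u)
    (htrans : ∀ a b c, prec a b → prec b c → prec a c)
    (hg : ∀ v, v ∉ O → IsCorrectingSet G I lam prec v (g v)) : GFlow G I O lam g prec :=
  ⟨hirrefl, htrans, fun v hv => (hg v hv).inter_input, fun v hv => (hg v hv).g1,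
    fun v hv => (hg v hv).g2, fun v hv => (hg v hv).gXY, fun v hv => (hg v hv).gXZ,
    fun v hv => (hg v hv).gYZ⟩

end GFlow

theorem gflow_symmDiff_successor_general {V : Type*} [Fintype V] [DecidableEq V]
    (G : SimpleGraph V) (I O : Set V) (lam : V → MPlane)
    (g : V → Set V) (prec : V → V → Prop)
    (h : GFlow G I O lam g prec) (v w : V) (hw : w ∉ O)
    (hvw : prec v w) :
    GFlow G I O lam (fun x => if x = v then symmDiff (g v) (g w) else g x) prec := by
  classical
  refine GFlow.of_isCorrectingSet h.irrefl h.trans fun u hu => ?_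
  by_cases huv : u = v
  · subst huv
    simpa only [if_pos] using
      (h.isCorrectingSet hu).symmDiff (h.isCorrectingSet hw) h.irrefl h.trans hvw
  · simpa only [if_neg huv] using h.isCorrectingSet hu

/-- Replacing `g v` by `g v Δ g w` for some `w` with `v ≺ w` yields another gflow. -/
theorem gflow_symmDiff_successor {V : Type*} [Fintype V] [DecidableEq V]
    (G : SimpleGraph V) (I O : Set V) (lam : V → MPlane)
    (g : V → Set V) (prec : V → V → Prop)
    (h : GFlow G I O lam g prec) (v w : V) (hv : v ∉ O) (hw : w ∉ O)
    (hvw : prec v w) :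
    GFlow G I O lam (fun x => if x = v then symmDiff (g v) (g w) else g x) prec :=
  gflow_symmDiff_successor_general G I O lam g prec h v w hw hvw
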